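/- arXiv:2602.19696 — 2 statements merged into one kernel-verified Lean document; each statement's English description precedes it below -/
import Mathlib

section
/- For every R₀ > 0, α₀ > 0, κ > 0 and A > 0, consider the Riccati-type ODE z' = α₀(R₀ - A·T² + κz²). If R₀ > (1/α₀)·√(A/κ), then there is no solution z: ℝ → ℝ defined for all T ∈ ℝ; equivalently, every maximal solution blows up to +∞ in finite time or escapes, when R₀·α₀·√(κ/A) > 1. -/
/-!
After the rescaling `y = α₀ κ z` the equation becomes `y' = y² + a - β² T²` with
`a = α₀² κ R₀` and `β = α₀ κ √(A / κ)`, and the hypothesis reads `a > β`. The substitution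
`u = exp (-∫ y)` linearizes it to the Schrödinger equation `u'' = (β² T² - a) u`, whose potential
has ground state `g = exp (-β T² / 2)` of energy `β`. The Wronskian `u' g - u g'` then has
derivative `-(a - β) u g < 0`, so it is strictly decreasing; once it is negative,
`(u / g)' = (u' g - u g') / g²` stays below a negative constant, which contradicts `u / g > 0`.
The reflection `y ↦ -y (-·)` preserves the equation and lets us assume `y 0 ≥ 0`, i.e. that the
Wronskian is `≤ 0` at `0`.
-/

open Real

noncomputable section

def IsRiccatiSolution (a β : ℝ) (y : ℝ → ℝ) : Prop :=
  ∀ t, HasDerivAt y (y t ^ 2 + a - β ^ 2 * t ^ 2) t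

/-- `u / g` in the notation of the header. -/
def riccatiRatio (β : ℝ) (y : ℝ → ℝ) (t : ℝ) : ℝ :=
  exp (β * t ^ 2 / 2 - ∫ s in (0 : ℝ)..t, y s)

/-- `u' g - u g'` in the notation of the header. -/
def riccatiWronskian (β : ℝ) (y : ℝ → ℝ) (t : ℝ) : ℝ :=
  (β * t - y t) * exp (-(β * t ^ 2 / 2) - ∫ s in (0 : ℝ)..t, y s)

theorem hasDerivAt_half_mul_sq (β t : ℝ) : HasDerivAt (fun t => β * t ^ 2 / 2) (β * t) t :=
  (((hasDerivAt_pow 2 t).const_mul β).div_const 2).congr_deriv (by ring)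

theorem riccatiRatio_pos (β : ℝ) (y : ℝ → ℝ) (t : ℝ) : 0 < riccatiRatio β y t :=
  exp_pos _

theorem riccatiWronskian_zero (β : ℝ) (y : ℝ → ℝ) : riccatiWronskian β y 0 = -y 0 := by
  simp [riccatiWronskian]

theorem hasDerivAt_riccatiRatio {β : ℝ} {y : ℝ → ℝ} (hy : Continuous y) (t : ℝ) :
    HasDerivAt (riccatiRatio β y) (riccatiWronskian β y t * exp (β * t ^ 2)) t := by
  refine ((hasDerivAt_half_mul_sq β t).fun_sub
    (hy.integral_hasStrictDerivAt 0 t).hasDerivAt).exp.congr_deriv ?_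
  rw [riccatiWronskian, mul_assoc, ← exp_add]
  ring_nf

namespace IsRiccatiSolution

variable {a β : ℝ} {y : ℝ → ℝ}

theorem continuous (hy : IsRiccatiSolution a β y) : Continuous y :=
  continuous_iff_continuousAt.2 fun t => (hy t).continuousAt

theorem comp_neg (hy : IsRiccatiSolution a β y) : IsRiccatiSolution a β fun t => -y (-t) :=
  fun t => ((hy (-t)).comp t (hasDerivAt_neg t)).fun_neg.congr_deriv (by ring)

theorem hasDerivAt_riccatiWronskian (hy : IsRiccatiSolution a β y) (t : ℝ) :
    HasDerivAt (riccatiWronskian β y)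
      (-(a - β) * exp (-(β * t ^ 2 / 2) - ∫ s in (0 : ℝ)..t, y s)) t :=
  ((((hasDerivAt_id t).const_mul β).fun_sub (hy t)).fun_mul
    ((hasDerivAt_half_mul_sq β t).fun_neg.fun_sub
      (hy.continuous.integral_hasStrictDerivAt 0 t).hasDerivAt).exp).congr_deriv
    (by simp only [id]; ring)

theorem strictAnti_riccatiWronskian (hy : IsRiccatiSolution a β y) (hab : β < a) :
    StrictAnti (riccatiWronskian β y) :=
  strictAnti_of_hasDerivAt_neg hy.hasDerivAt_riccatiWronskian fun _ =>
    mul_neg_of_neg_of_pos (by linarith) (exp_pos _)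

end IsRiccatiSolution

theorem exists_nonpos_of_hasDerivAt_le_neg {f f' : ℝ → ℝ} {t₀ m : ℝ} (hm : 0 < m)
    (hf : ∀ t, HasDerivAt f (f' t) t) (hle : ∀ t, t₀ ≤ t → f' t ≤ -m) : ∃ t, f t ≤ 0 := by
  have hdiff : Differentiable ℝ f := fun t => (hf t).differentiableAt
  set d := max (f t₀) 0 / m
  have hd : t₀ ≤ t₀ + d := le_add_of_nonneg_right (by positivity)
  have hmvt := (convex_Ici t₀).image_sub_le_mul_sub_of_deriv_le hdiff.continuous.continuousOn
    hdiff.differentiableOn (fun t ht => (hf t).deriv ▸ hle t (interior_subset ht))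
    t₀ Set.self_mem_Ici (t₀ + d) hd hd
  have hmd : m * d = max (f t₀) 0 := mul_div_cancel₀ _ hm.ne'
  rw [add_sub_cancel_left] at hmvt
  exact ⟨t₀ + d, by linarith [le_max_left (f t₀) 0]⟩

theorem not_isRiccatiSolution {a β : ℝ} (hβ : 0 ≤ β) (hab : β < a) (y : ℝ → ℝ) :
    ¬IsRiccatiSolution a β y := by
  intro hy
  wlog hy0 : 0 ≤ y 0 generalizing y
  · exact this _ hy.comp_neg (by simp; linarith)
  have hanti := hy.strictAnti_riccatiWronskian hab
  have hW₁ : riccatiWronskian β y 1 < 0 :=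
    (hanti one_pos).trans_le (by rw [riccatiWronskian_zero]; linarith)
  have hle : ∀ t, 1 ≤ t → riccatiWronskian β y t * exp (β * t ^ 2) ≤ riccatiWronskian β y 1 := by
    intro t ht
    have hWt := hanti.antitone ht
    nlinarith [one_le_exp (by positivity : 0 ≤ β * t ^ 2)]
  obtain ⟨t, ht⟩ := exists_nonpos_of_hasDerivAt_le_neg (neg_pos.2 hW₁)
    (hasDerivAt_riccatiRatio hy.continuous) fun t h => by rw [neg_neg]; exact hle t h
  exact (riccatiRatio_pos β y t).not_ge ht

end

theorem riccati_unsafe_overshoot_blowup_general (R₀ α₀ κ A : ℝ)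
    (hα : 0 < α₀) (hκ : 0 < κ) (hA : 0 < A)
    (hcrit : R₀ > 1 / α₀ * Real.sqrt (A / κ)) :
    ¬∃ z : ℝ → ℝ, ∀ T : ℝ,
      HasDerivAt z (α₀ * (R₀ - A * T ^ 2 + κ * (z T) ^ 2)) T := by
  rintro ⟨z, hz⟩
  set β := α₀ * κ * √(A / κ)
  have hβ_sq : β ^ 2 = α₀ ^ 2 * κ * A := by
    rw [mul_pow, sq_sqrt (by positivity)]; field_simp
  have hβ_lt : β < α₀ ^ 2 * κ * R₀ := by
    have : √(A / κ) < α₀ * R₀ := by rwa [gt_iff_lt, one_div_mul_eq_div, div_lt_iff₀' hα] at hcrit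
    calc β = α₀ * κ * √(A / κ) := rfl
      _ < α₀ * κ * (α₀ * R₀) := by gcongr
      _ = α₀ ^ 2 * κ * R₀ := by ring
  exact not_isRiccatiSolution (by positivity) hβ_lt (fun T => α₀ * κ * z T) fun T =>
    ((hz T).const_mul (α₀ * κ)).congr_deriv (by rw [hβ_sq]; ring)

theorem riccati_unsafe_overshoot_blowup (R₀ α₀ κ A : ℝ)
    (hR : 0 < R₀) (hα : 0 < α₀) (hκ : 0 < κ) (hA : 0 < A)
    (hcrit : R₀ > 1 / α₀ * Real.sqrt (A / κ)) :
    ¬∃ z : ℝ → ℝ, ∀ T : ℝ,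
      HasDerivAt z (α₀ * (R₀ - A * T ^ 2 + κ * (z T) ^ 2)) T :=
  riccati_unsafe_overshoot_blowup_general R₀ α₀ κ A hα hκ hA hcrit
end

section
/- Define ε̃ = ε(3a3a1 - a2²)/(9a3) and γ̃ = γ·sgn(2a2³ - 9a3a2a1 + 27a3²a0)·√(a2² - 3a3a1)/(3|a3|), under Assumption A3 (4p³ + 27q² = 0, p ≠ 0, a3 < 0 for the cubic a3x³ + a2x² + a1x + a0 with depressed coefficients p, q). Then with the change of variable x = sgn(2a2³ - 9a3a2a1 + 27a3²a0)·√(a2² - 3a3a1)·X/(3|a3|) - a2/(3a3), the identity ε(a3x³ + a2x² + a1x + a0) = (dx/dX)·ε̃·(3X - X³ + 2) holds for all X, where dx/dX is the constant scale factor; consequently a solution X(t) of Ẋ = ε̃(3X - X³ + 2) yields a solution x(t) of ẋ = ε(a3x³ + a2x² + a1x + a0), and γẋ = γ̃Ẋ. -/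
set_option maxHeartbeats 1000000


private lemma cubic_depress_aux (a3 a2 a1 a0 p q k X : ℝ) (ha3' : a3 ≠ 0)
    (hp : p = (3 * a3 * a1 - a2 ^ 2) / (3 * a3 ^ 2))
    (hq : q = (2 * a2 ^ 3 - 9 * a3 * a2 * a1 + 27 * a3 ^ 2 * a0) / (27 * a3 ^ 3)) :
    a3 * (k * X - a2 / (3 * a3)) ^ 3 + a2 * (k * X - a2 / (3 * a3)) ^ 2
        + a1 * (k * X - a2 / (3 * a3)) + a0
      = a3 * ((k * X) ^ 3 + p * (k * X) + q) := by
  rw [hp, hq]; field_simp; ring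

theorem cubic_slow_system_canonical_reduction
    (a3 a2 a1 a0 p q ε γ : ℝ) (hε : 0 < ε) (ha3 : a3 < 0)
    (hp : p = (3 * a3 * a1 - a2 ^ 2) / (3 * a3 ^ 2))
    (hq : q = (2 * a2 ^ 3 - 9 * a3 * a2 * a1 + 27 * a3 ^ 2 * a0) / (27 * a3 ^ 3))
    (hdisc : 4 * p ^ 3 + 27 * q ^ 2 = 0) (hpne : p ≠ 0)
    (k εt γt : ℝ)
    (hk : k = Real.sign (2 * a2 ^ 3 - 9 * a3 * a2 * a1 + 27 * a3 ^ 2 * a0)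
        * Real.sqrt (a2 ^ 2 - 3 * a3 * a1) / (3 * |a3|))
    (hεt : εt = ε * (3 * a3 * a1 - a2 ^ 2) / (9 * a3))
    (hγt : γt = γ * k) :
    (∀ X : ℝ,
      ε * (a3 * (k * X - a2 / (3 * a3)) ^ 3 + a2 * (k * X - a2 / (3 * a3)) ^ 2
          + a1 * (k * X - a2 / (3 * a3)) + a0)
        = k * (εt * (3 * X - X ^ 3 + 2))) ∧
    (∀ X : ℝ → ℝ,
      (∀ t : ℝ, HasDerivAt X (εt * (3 * X t - (X t) ^ 3 + 2)) t) →
      ∀ t : ℝ,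
        HasDerivAt (fun u : ℝ => k * X u - a2 / (3 * a3))
          (ε * (a3 * (k * X t - a2 / (3 * a3)) ^ 3
            + a2 * (k * X t - a2 / (3 * a3)) ^ 2
            + a1 * (k * X t - a2 / (3 * a3)) + a0)) t ∧
        γ * (ε * (a3 * (k * X t - a2 / (3 * a3)) ^ 3
            + a2 * (k * X t - a2 / (3 * a3)) ^ 2
            + a1 * (k * X t - a2 / (3 * a3)) + a0))
          = γt * (εt * (3 * X t - (X t) ^ 3 + 2))) := by
  have ha3' : a3 ≠ 0 := ne_of_lt ha3
  have ha3sq : (0:ℝ) < a3 ^ 2 := by positivity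
  -- p < 0
  have hp0 : p < 0 := by
    rcases lt_trichotomy p 0 with h | h | h
    · exact h
    · exact absurd h hpne
    · nlinarith [sq_nonneg q, pow_pos h 3]
  have hpe : p * (3 * a3 ^ 2) = 3 * a3 * a1 - a2 ^ 2 := by rw [hp]; field_simp
  -- a2^2 - 3*a3*a1 > 0
  have hr2pos : 0 < a2 ^ 2 - 3 * a3 * a1 := by
    nlinarith [mul_neg_of_neg_of_pos hp0 (by positivity : (0:ℝ) < 3 * a3 ^ 2)]
  set N := 2 * a2 ^ 3 - 9 * a3 * a2 * a1 + 27 * a3 ^ 2 * a0 with hN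
  set r := Real.sqrt (a2 ^ 2 - 3 * a3 * a1) with hr
  set s := Real.sign N with hsdef
  have hrsq : r ^ 2 = a2 ^ 2 - 3 * a3 * a1 := Real.sq_sqrt hr2pos.le
  have hrpos : 0 < r := Real.sqrt_pos.mpr hr2pos
  have hqe : q * (27 * a3 ^ 3) = N := by rw [hq]; field_simp
  -- N^2 = (2 r^3)^2
  have hN2 : N ^ 2 = (2 * r ^ 3) ^ 2 := by
    have h1 : (4 * p ^ 3 + 27 * q ^ 2) * (27 * a3 ^ 6)
        = N ^ 2 - 4 * (a2 ^ 2 - 3 * a3 * a1) ^ 3 := by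
      linear_combination
        (4 * ((p * (3 * a3 ^ 2)) ^ 2 + (p * (3 * a3 ^ 2)) * (3 * a3 * a1 - a2 ^ 2)
          + (3 * a3 * a1 - a2 ^ 2) ^ 2)) * hpe
        + (q * (27 * a3 ^ 3) + N) * hqe
    rw [hdisc] at h1
    have h2 : (2 * r ^ 3) ^ 2 = 4 * (a2 ^ 2 - 3 * a3 * a1) ^ 3 := by
      rw [← hrsq]; ring
    linarith
  have hNne : N ≠ 0 := by
    intro h
    rw [h] at hN2
    nlinarith [pow_pos hrpos 3]
  have hs1 : s = 1 ∨ s = -1 := by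
    rcases hNne.lt_or_gt with h | h
    · right; rw [hsdef, Real.sign_of_neg h]
    · left; rw [hsdef, Real.sign_of_pos h]
  have hssq : s ^ 2 = 1 := by rcases hs1 with h | h <;> rw [h] <;> norm_num
  have hs3 : s ^ 3 = s := by rcases hs1 with h | h <;> rw [h] <;> norm_num
  -- N = s * 2 r^3
  have hNs : N = s * (2 * r ^ 3) := by
    have hz : (N - 2 * r ^ 3) * (N + 2 * r ^ 3) = 0 := by linear_combination hN2
    rcases mul_eq_zero.mp hz with h | h
    · have hNp : N = 2 * r ^ 3 := by linarith
      have : 0 < N := by nlinarith [pow_pos hrpos 3]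
      rw [hsdef, Real.sign_of_pos this, hNp]; ring
    · have hNn : N = -(2 * r ^ 3) := by linarith
      have : N < 0 := by nlinarith [pow_pos hrpos 3]
      rw [hsdef, Real.sign_of_neg this, hNn]; ring
  -- basic equation for k
  have habs : |a3| = -a3 := abs_of_neg ha3
  have hkk : k * (3 * (-a3)) = s * r := by
    rw [hk, habs, hsdef]
    field_simp
  have hsq : k ^ 2 * (9 * a3 ^ 2) = r ^ 2 := by
    linear_combination (k * (3 * (-a3)) + s * r) * hkk + r ^ 2 * hssq
  have hcube : k ^ 3 * (27 * a3 ^ 3) = -(s * r ^ 3) := by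
    linear_combination
      (-(k * (3 * (-a3))) ^ 2 - (k * (3 * (-a3))) * (s * r) - (s * r) ^ 2) * hkk
      - r ^ 3 * hs3
  have h9 : ((9:ℝ) * a3 ^ 2) ≠ 0 := by positivity
  have h27 : ((27:ℝ) * a3 ^ 3) ≠ 0 := by
    intro h; exact ha3' (pow_eq_zero_iff (n := 3) (by norm_num) |>.mp (by linarith))
  -- k^2 = -p/3
  have hk2 : k ^ 2 = -p / 3 := by
    have h2 : k ^ 2 * (9 * a3 ^ 2) = (-p / 3) * (9 * a3 ^ 2) := by
      rw [hsq]
      linear_combination hrsq + hpe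
    exact mul_right_cancel₀ h9 h2
  -- q = -2 k^3
  have hq3 : q = -2 * k ^ 3 := by
    have h2 : q * (27 * a3 ^ 3) = (-2 * k ^ 3) * (27 * a3 ^ 3) := by
      rw [hqe, hNs]
      linear_combination 2 * hcube
    exact mul_right_cancel₀ h27 h2
  have h9a3 : (9:ℝ) * a3 ≠ 0 := by intro h; exact ha3' (by linarith)
  have hεte : εt * (9 * a3) = ε * (3 * a3 * a1 - a2 ^ 2) := by
    rw [hεt, div_mul_cancel₀ _ h9a3]
  have hεt2 : εt = -(ε * a3 * k ^ 2) := by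
    refine mul_right_cancel₀ h9a3 ?_
    rw [hεte]
    linear_combination ε * hsq + ε * hrsq
  clear_value N r s
  rw [hN] at hq
  -- main algebraic identity
  have main : ∀ X : ℝ,
      ε * (a3 * (k * X - a2 / (3 * a3)) ^ 3 + a2 * (k * X - a2 / (3 * a3)) ^ 2
          + a1 * (k * X - a2 / (3 * a3)) + a0)
        = k * (εt * (3 * X - X ^ 3 + 2)) := by
    intro X
    have hdep := cubic_depress_aux a3 a2 a1 a0 p q k X ha3' hp hq
    have hp' : p = -3 * k ^ 2 := by linear_combination 3 * hk2
    rw [hdep, hεt2, hp', hq3]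
    ring
  refine ⟨main, ?_⟩
  intro X hX t
  constructor
  · have h1 : HasDerivAt (fun u : ℝ => k * X u - a2 / (3 * a3))
        (k * (εt * (3 * X t - (X t) ^ 3 + 2))) t :=
      ((hX t).const_mul k).sub_const _
    rw [main (X t)]
    exact h1
  · rw [main (X t), hγt]; ring
end
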